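/- Let n, m < ω, let X₁,…,Xₙ ⊆ ω with X₁ ∩ … ∩ Xₙ infinite, and let I₁,…,Iₙ be partitions of ω into consecutive finite intervals. Then the set D(X₁,…,Xₙ; I₁,…,Iₙ; m) = {s ∈ 2^{<ω} : every x ∈ 2^ω extending s satisfies |coh(X₁,I₁,x) ∩ … ∩ coh(Xₙ,Iₙ,x)| ≥ m} is dense in the partial order (2^{<ω}, ⊇): every s ∈ 2^{<ω} has an extension belonging to it. -/

import Mathlib

/-!
Extend a condition `t` by zeros up to a point `k ∈ X₁ ∩ … ∩ Xₙ` and put a one at `k`. If `k`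
is chosen so far out that, in every partition `Iᵢ`, its interval lies at least two intervals
beyond those meeting `[0, |t|)`, then for every real `x` through this extension each
`coh(Xᵢ, Iᵢ, x)` climbs through the ones of `x` below `|t|` and must then pick `k`. Repeating
this `m` times with fresh points forces `m` common elements.
-/

open Set

/-- `x ∈ 2^ω` extends `s ∈ 2^{<ω}`: `s` is an initial segment of `x`. -/
def ExtendsSeq (x : ℕ → Bool) (s : List Bool) : Prop :=
  ∀ (i : ℕ) (h : i < s.length), x i = s[i]

/-- `I : ℕ → Set ℕ` is a partition of `ω` into consecutive finite intervals: the pieces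
are finite, nonempty, pairwise disjoint, cover `ω`, and every element of `Iₙ` is less
than every element of `I_{n+1}`. -/
structure IntervalPartition (I : ℕ → Set ℕ) : Prop where
  fin : ∀ n, (I n).Finite
  nonempty : ∀ n, (I n).Nonempty
  cover : (⋃ n, I n) = Set.univ
  disj : ∀ m n, m ≠ n → Disjoint (I m) (I n)
  consec : ∀ n, ∀ a ∈ I n, ∀ b ∈ I (n + 1), a < b

/-- Minimum of a set of naturals, as an `Option` (`none` if the set is empty). -/
noncomputable def nmin (S : Set ℕ) : Option ℕ := by
  classical exact if S.Nonempty then some (sInf S) else none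

/-- The recursive sequence of elements of the Cohen real `coh(X, I, x)`, defined for as
long as the minima exist: `x₀ = min {k ∈ X : x k = 1}`, and `x_{n+1}` is the least
`k ∈ X` with `x k = 1` such that whenever `k ∈ Iᵢ` and `xₙ ∈ Iⱼ`, then `j + 1 < i`. -/
noncomputable def cohSeq (X : Set ℕ) (I : ℕ → Set ℕ) (x : ℕ → Bool) : ℕ → Option ℕ
  | 0 => nmin {k | k ∈ X ∧ x k = true}
  | n + 1 =>
    match cohSeq X I x n with
    | none => none
    | some p => nmin {k | k ∈ X ∧ x k = true ∧ ∀ i j, k ∈ I i → p ∈ I j → j + 1 < i}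

/-- The Cohen real coded by `x` and associated to `X` and `I`: the set of values of the
(partial) recursive sequence `cohSeq`. -/
noncomputable def coh (X : Set ℕ) (I : ℕ → Set ℕ) (x : ℕ → Bool) : Set ℕ :=
  {k | ∃ n, cohSeq X I x n = some k}

/-- The set `D(X₁,…,Xₙ; I₁,…,Iₙ; m) ⊆ 2^{<ω}` of conditions forcing
`|coh(X₁,I₁,x) ∩ … ∩ coh(Xₙ,Iₙ,x)| ≥ m`. -/
noncomputable def Dset {n : ℕ} (X : Fin n → Set ℕ) (I : Fin n → ℕ → Set ℕ) (m : ℕ) :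
    Set (List Bool) :=
  {s | ∀ x : ℕ → Bool, ExtendsSeq x s →
    ∃ T : Finset ℕ, m ≤ T.card ∧ ↑T ⊆ ⋂ i, coh (X i) (I i) x}

open Filter

def IntervalSeparated (I : ℕ → Set ℕ) (p k : ℕ) : Prop :=
  ∀ i j, k ∈ I i → p ∈ I j → j + 1 < i

namespace IntervalPartition

variable {I : ℕ → Set ℕ}

theorem exists_mem (hI : IntervalPartition I) (k : ℕ) : ∃ j, k ∈ I j :=
  mem_iUnion.mp (hI.cover ▸ mem_univ k)

theorem lt_of_mem_of_lt (hI : IntervalPartition I) {i j a b : ℕ} (hij : i < j)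
    (ha : a ∈ I i) (hb : b ∈ I j) : a < b := by
  induction j, hij using Nat.le_induction generalizing b with
  | base => exact hI.consec i a ha b hb
  | succ j _ ih =>
    obtain ⟨c, hc⟩ := hI.nonempty j
    exact (ih hc).trans (hI.consec j c hc b hb)

theorem lt_of_intervalSeparated (hI : IntervalPartition I) {p k : ℕ}
    (h : IntervalSeparated I p k) : p < k := by
  obtain ⟨i, hi⟩ := hI.exists_mem k
  obtain ⟨j, hj⟩ := hI.exists_mem p
  exact hI.lt_of_mem_of_lt (by have := h i j hi hj; omega) hj hi

theorem eventually_intervalSeparated (hI : IntervalPartition I) (N : ℕ) :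
    ∀ᶠ k in atTop, ∀ p < N, IntervalSeparated I p k := by
  obtain ⟨J, hN⟩ := hI.exists_mem N
  have hfin : (⋃ j ∈ Finset.range (J + 2), I j).Finite :=
    (Finset.range (J + 2)).finite_toSet.biUnion fun j _ => hI.fin j
  filter_upwards [Nat.cofinite_eq_atTop ▸ hfin.eventually_cofinite_notMem]
    with k hk p hp i j hki hpj
  have hj : j ≤ J := by
    by_contra! hJj
    exact absurd (hI.lt_of_mem_of_lt hJj hN hpj) (by omega)
  have hi : J + 1 < i := by
    by_contra! hiJ
    exact hk (mem_biUnion (Finset.mem_coe.mpr (Finset.mem_range.mpr (by omega))) hki)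
  omega

end IntervalPartition

theorem nmin_mem {S : Set ℕ} {p : ℕ} (h : nmin S = some p) : p ∈ S := by
  by_cases hS : S.Nonempty
  · simp only [nmin, hS, if_true, Option.some.injEq] at h
    exact h ▸ Nat.sInf_mem hS
  · simp [nmin, hS] at h

theorem exists_nmin_eq_some_le {S : Set ℕ} {k : ℕ} (hk : k ∈ S) :
    ∃ p, nmin S = some p ∧ p ∈ S ∧ p ≤ k :=
  ⟨sInf S, by simp [nmin, show S.Nonempty from ⟨k, hk⟩], Nat.sInf_mem ⟨k, hk⟩, Nat.sInf_le hk⟩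

section Coh

variable {X : Set ℕ} {I : ℕ → Set ℕ} {x : ℕ → Bool}

theorem cohSeq_succ_of_eq_some {n p : ℕ} (h : cohSeq X I x n = some p) :
    cohSeq X I x (n + 1) = nmin {k | k ∈ X ∧ x k = true ∧ IntervalSeparated I p k} := by
  rw [cohSeq, h]
  rfl

theorem mem_and_eq_true_of_cohSeq_eq_some {n p : ℕ} (h : cohSeq X I x n = some p) :
    p ∈ X ∧ x p = true := by
  cases n with
  | zero => exact nmin_mem h
  | succ n =>
    cases hq : cohSeq X I x n with
    | none => simp [cohSeq, hq] at h
    | some q =>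
      rw [cohSeq_succ_of_eq_some hq] at h
      exact ⟨(nmin_mem h).1, (nmin_mem h).2.1⟩

theorem mem_coh_of_forall_intervalSeparated (hI : IntervalPartition I) {k : ℕ} (hkX : k ∈ X)
    (hxk : x k = true) (hsep : ∀ p < k, p ∈ X → x p = true → IntervalSeparated I p k) :
    k ∈ coh X I x := by
  by_contra hk
  -- Missing `k`, the sequence would have to climb strictly and stay below `k` forever.
  have climb : ∀ n, ∃ p, cohSeq X I x n = some p ∧ n ≤ p ∧ p < k := by
    intro n
    induction n with
    | zero =>
      obtain ⟨p, hp, -, hpk⟩ := exists_nmin_eq_some_le (S := {q | q ∈ X ∧ x q = true}) ⟨hkX, hxk⟩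
      exact ⟨p, hp, p.zero_le, hpk.lt_of_ne fun h => hk ⟨0, h ▸ hp⟩⟩
    | succ n ih =>
      obtain ⟨p, hp, hnp, hpk⟩ := ih
      obtain ⟨hpX, hxp⟩ := mem_and_eq_true_of_cohSeq_eq_some hp
      obtain ⟨q, hq, hqS, hqk⟩ :=
        exists_nmin_eq_some_le (S := {q | q ∈ X ∧ x q = true ∧ IntervalSeparated I p q})
          ⟨hkX, hxk, hsep p hpk hpX hxp⟩
      rw [← cohSeq_succ_of_eq_some hp] at hq
      have hpq : p < q := hI.lt_of_intervalSeparated hqS.2.2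
      exact ⟨q, hq, by omega, hqk.lt_of_ne fun h => hk ⟨n + 1, h ▸ hq⟩⟩
  obtain ⟨p, -, hkp, hpk⟩ := climb k
  omega

end Coh

theorem ExtendsSeq.of_prefix {x : ℕ → Bool} {s t : List Bool} (h : ExtendsSeq x t)
    (hst : s <+: t) : ExtendsSeq x s := by
  intro i hi
  rw [h i (hi.trans_le hst.length_le), hst.getElem hi]

theorem ExtendsSeq.append_replicate_false_true {x : ℕ → Bool} {t : List Bool} {r : ℕ}
    (h : ExtendsSeq x (t ++ List.replicate r false ++ [true])) :
    x (t.length + r) = true ∧ ∀ p < t.length + r, x p = true → p < t.length := by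
  refine ⟨by simpa using h (t.length + r) (by simp), fun p hp hxp => ?_⟩
  by_contra! htp
  have := h p (by simp; omega)
  simp [List.getElem_append, htp, hxp] at this
  omega

section Density

variable {n : ℕ} {X : Fin n → Set ℕ} {I : Fin n → ℕ → Set ℕ}

theorem exists_prefix_forcing_new_mem_iInter_coh (hX : (⋂ i, X i).Infinite)
    (hI : ∀ i, IntervalPartition (I i)) (t : List Bool) (K : Finset ℕ) :
    ∃ k ∉ K, ∃ t', t <+: t' ∧ ∀ x, ExtendsSeq x t' → k ∈ ⋂ i, coh (X i) (I i) x := by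
  obtain ⟨k, hkX, hkK, htk, hsep⟩ : ∃ k ∈ ⋂ i, X i, k ∉ K ∧ t.length ≤ k ∧
      ∀ i, ∀ p < t.length, IntervalSeparated (I i) p k :=
    ((Nat.frequently_atTop_iff_infinite.mpr hX).and_eventually
      ((Nat.cofinite_eq_atTop ▸ K.eventually_cofinite_notMem).and
        ((eventually_ge_atTop _).and
          (eventually_all.mpr fun i => (hI i).eventually_intervalSeparated t.length)))).exists
  obtain ⟨r, rfl⟩ := Nat.exists_eq_add_of_le htk
  refine ⟨_, hkK, t ++ List.replicate r false ++ [true],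
    List.prefix_append_of_prefix (List.prefix_append _ _), fun x hx => mem_iInter.mpr fun i => ?_⟩
  obtain ⟨hxk, hbits⟩ := hx.append_replicate_false_true
  exact mem_coh_of_forall_intervalSeparated (hI i) (mem_iInter.mp hkX i) hxk
    fun p hp _ hxp => hsep i p (hbits p hp hxp)

theorem exists_prefix_forcing_card_iInter_coh (hX : (⋂ i, X i).Infinite)
    (hI : ∀ i, IntervalPartition (I i)) (m : ℕ) (s : List Bool) :
    ∃ t, s <+: t ∧ ∃ K : Finset ℕ, K.card = m ∧
      ∀ x, ExtendsSeq x t → ↑K ⊆ ⋂ i, coh (X i) (I i) x := by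
  induction m with
  | zero => exact ⟨s, List.prefix_refl s, ∅, rfl, by simp⟩
  | succ m ih =>
    obtain ⟨t, hst, K, hK, hKt⟩ := ih
    obtain ⟨k, hkK, t', htt', hkt'⟩ := exists_prefix_forcing_new_mem_iInter_coh hX hI t K
    refine ⟨t', hst.trans htt', insert k K, by rw [Finset.card_insert_of_notMem hkK, hK],
      fun x hx => ?_⟩
    rw [Finset.coe_insert]
    exact insert_subset (hkt' x hx) (hKt x (hx.of_prefix htt'))

end Density

/-- if `X₁ ∩ … ∩ Xₙ` is infinite and `I₁,…,Iₙ` are partitions of `ω` into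
consecutive finite intervals, then for every `m` the set `D(X₁,…,Xₙ; I₁,…,Iₙ; m)` is
dense in `(2^{<ω}, ⊇)`: every finite binary sequence has an extension in it. -/
theorem stmt17 (n m : ℕ) (X : Fin n → Set ℕ) (hX : (⋂ i, X i).Infinite)
    (I : Fin n → ℕ → Set ℕ) (hI : ∀ i, IntervalPartition (I i)) :
    ∀ s : List Bool, ∃ t ∈ Dset X I m, s <+: t := by
  intro s
  obtain ⟨t, hst, K, hK, hKt⟩ := exists_prefix_forcing_card_iInter_coh hX hI m s
  exact ⟨t, fun x hx => ⟨K, hK.ge, hKt x hx⟩, hst⟩
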